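/- Key estimate for the discrete eigenvalue (Lemma 3.4(b), abstract form): Assume conditions (A), (B) and (C) hold with constants α ≥ 0 and β ≥ 0, assume β·λ(j) < 1, and let λ_h ≥ 0 be a j-th discrete min-max bound. Then there exists v ∈ W with b(v, v) = 1 such that (1 − α − β·λ_h)·D(v)² ≤ λ(j) − λ_h. -/
import Mathlib


/-- Key estimate for the discrete eigenvalue (Lemma 3.4(b), abstract form):
Assume conditions (A), (B) and (C) hold with constants `α ≥ 0` and `β ≥ 0`, assume
`β·λ(j) < 1`, and let `λ_h ≥ 0` be a `j`-th discrete min-max bound. Then there exists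
`v ∈ W` with `b(v,v) = 1` such that `(1 − α − β·λ_h)·D(v)² ≤ λ(j) − λ_h`. -/
theorem key_estimate_discrete_eigenvalue
    {V : Type*} [AddCommGroup V] [Module ℝ V]
    {Vh : Type*} [AddCommGroup Vh] [Module ℝ Vh] [FiniteDimensional ℝ Vh]
    (a b : V →ₗ[ℝ] V →ₗ[ℝ] ℝ)
    (ha_symm : ∀ x y, a x y = a y x) (hb_symm : ∀ x y, b x y = b y x)
    (ah sh bh : Vh →ₗ[ℝ] Vh →ₗ[ℝ] ℝ)
    (hah_symm : ∀ x y, ah x y = ah y x) (hsh_symm : ∀ x y, sh x y = sh y x)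
    (hbh_symm : ∀ x y, bh x y = bh y x)
    (hah_pos : ∀ x, 0 ≤ ah x x) (hsh_pos : ∀ x, 0 ≤ sh x x) (hbh_pos : ∀ x, 0 ≤ bh x x)
    (Ih : V →ₗ[ℝ] Vh)
    (D : V → ℝ) (hD : ∀ v, 0 ≤ D v)
    (j : ℕ) (hj : 1 ≤ j)
    (u : Fin j → V) (lam : Fin j → ℝ) (hlam : Monotone lam)
    (hnorm : ∀ i, b (u i) (u i) = 1)
    (heig : ∀ i, a (u i) (u i) = lam i)
    (horth_a : ∀ i k, i ≠ k → a (u i) (u k) = 0)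
    (horth_b : ∀ i k, i ≠ k → b (u i) (u k) = 0)
    (α β : ℝ) (hα : 0 ≤ α) (hβ : 0 ≤ β)
    (hA : ∀ v ∈ Submodule.span ℝ (Set.range u),
      ah (Ih v) (Ih v) ≤ a v v - (D v) ^ 2)
    (hB : ∀ v ∈ Submodule.span ℝ (Set.range u),
      sh (Ih v) (Ih v) ≤ α * (D v) ^ 2)
    (hC : ∀ v ∈ Submodule.span ℝ (Set.range u),
      b v v - β * (D v) ^ 2 ≤ bh (Ih v) (Ih v))
    (h_beta_lam : β * lam ⟨j - 1, by omega⟩ < 1)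
    (lamh : ℝ) (hlamh : 0 ≤ lamh)
    (hminmax : ∀ Wh : Submodule ℝ Vh, Module.finrank ℝ Wh = j →
      ∃ wh ∈ Wh, wh ≠ 0 ∧ lamh * bh wh wh ≤ ah wh wh + sh wh wh) :
    ∃ v ∈ Submodule.span ℝ (Set.range u), b v v = 1 ∧
      (1 - α - β * lamh) * (D v) ^ 2 ≤ lam ⟨j - 1, by omega⟩ - lamh := by

  classical
  set jm : Fin j := ⟨j - 1, by omega⟩ with hjm
  have hle : ∀ i : Fin j, lam i ≤ lam jm := by
    intro i
    exact hlam (by rw [Fin.le_def]; have := i.isLt; simp [hjm]; omega)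
  -- quadratic form computation for diagonal families
  have quad : ∀ (B : V →ₗ[ℝ] V →ₗ[ℝ] ℝ), (∀ i k, i ≠ k → B (u i) (u k) = 0) →
      ∀ c : Fin j → ℝ,
      B (∑ i, c i • u i) (∑ i, c i • u i) = ∑ i, (c i)^2 * B (u i) (u i) := by
    intro B hB0 c
    simp only [map_sum, map_smul, LinearMap.sum_apply, LinearMap.smul_apply, smul_eq_mul]
    refine Finset.sum_congr rfl fun x _ => ?_
    rw [Finset.sum_eq_single x (fun k _ hk => by rw [hB0 k x hk]; ring) (by simp)]
    ring
  -- the main normalization claim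
  have claim : ∀ c : Fin j → ℝ, 0 < ∑ i, (c i)^2 →
      ∃ v ∈ Submodule.span ℝ (Set.range u), b v v = 1 ∧ a v v ≤ lam jm ∧
        Ih v = (Real.sqrt (∑ i, (c i)^2))⁻¹ • (∑ i, c i • Ih (u i)) := by
    intro c hs
    set s := ∑ i, (c i)^2 with hsdef
    set t := (Real.sqrt s)⁻¹ with htdef
    have ht2 : t^2 = s⁻¹ := by
      rw [htdef, ← Real.sqrt_inv, Real.sq_sqrt (by positivity)]
    refine ⟨∑ i, (t * c i) • u i, ?_, ?_, ?_, ?_⟩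
    · exact Submodule.sum_mem _ fun i _ =>
        Submodule.smul_mem _ _ (Submodule.subset_span ⟨i, rfl⟩)
    · rw [quad b horth_b]
      simp only [hnorm, mul_one, mul_pow]
      rw [← Finset.mul_sum, ← hsdef, ht2, inv_mul_cancel₀ hs.ne']
    · rw [quad a horth_a]
      simp only [heig]
      have h1 : ∑ i, (t * c i)^2 * lam i ≤ ∑ i, (t * c i)^2 * lam jm :=
        Finset.sum_le_sum fun i _ => mul_le_mul_of_nonneg_left (hle i) (by positivity)
      have h2 : ∑ i, (t * c i)^2 * lam jm = lam jm := by
        rw [← Finset.sum_mul]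
        have hone : ∑ i, (t * c i)^2 = 1 := by
          simp only [mul_pow]
          rw [← Finset.mul_sum, ← hsdef, ht2, inv_mul_cancel₀ hs.ne']
        rw [hone, one_mul]
      linarith [h1, h2.le, h2.ge]
    · rw [map_sum, Finset.smul_sum]
      refine Finset.sum_congr rfl fun i _ => ?_
      rw [map_smul, smul_smul]
  -- positivity of sum of squares from nonzero coefficient
  have possum : ∀ c : Fin j → ℝ, (∃ i, c i ≠ 0) → 0 < ∑ i, (c i)^2 := by
    intro c ⟨i, hi⟩
    have : (0:ℝ) < (c i)^2 := by positivity
    refine lt_of_lt_of_le this ?_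
    exact Finset.single_le_sum (f := fun i => (c i)^2) (fun k _ => by positivity)
      (Finset.mem_univ i)
  -- linear independence of Ih ∘ u
  have hli : LinearIndependent ℝ (fun i => Ih (u i)) := by
    rw [Fintype.linearIndependent_iff]
    intro c hc0
    by_contra hcne
    push_neg at hcne
    obtain ⟨i, hi⟩ := hcne
    have hs := possum c ⟨i, hi⟩
    obtain ⟨v, hvmem, hvb, hva, hvI⟩ := claim c hs
    rw [hc0, smul_zero] at hvI
    have hCv := hC v hvmem
    have hAv := hA v hvmem
    rw [hvI] at hCv hAv
    simp only [map_zero, LinearMap.zero_apply] at hCv hAv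
    rw [hvb] at hCv
    -- 1 - β D² ≤ 0, and D² ≤ a v v ≤ lam jm, β lam jm < 1
    have hD2 : (D v)^2 ≤ lam jm := by linarith
    have : β * (D v)^2 ≤ β * lam jm := mul_le_mul_of_nonneg_left hD2 hβ
    linarith
  -- the j-dimensional discrete subspace
  have hrank : Module.finrank ℝ (Submodule.span ℝ (Set.range fun i => Ih (u i))) = j := by
    rw [finrank_span_eq_card hli, Fintype.card_fin]
  obtain ⟨wh, hwhmem, hwhne, hwhineq⟩ := hminmax _ hrank
  rw [Submodule.mem_span_range_iff_exists_fun ℝ] at hwhmem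
  obtain ⟨c, hc⟩ := hwhmem
  have hcne : ∃ i, c i ≠ 0 := by
    by_contra h
    push_neg at h
    apply hwhne
    rw [← hc]
    simp [h]
  have hs := possum c hcne
  obtain ⟨v, hvmem, hvb, hva, hvI⟩ := claim c hs
  rw [hc] at hvI
  set t := (Real.sqrt (∑ i, (c i)^2))⁻¹ with htdef
  have ht0 : 0 ≤ t^2 := by positivity
  -- scaled min-max inequality
  have hscaled : lamh * bh (Ih v) (Ih v) ≤ ah (Ih v) (Ih v) + sh (Ih v) (Ih v) := by
    rw [hvI]
    simp only [map_smul, LinearMap.smul_apply, smul_eq_mul]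
    have := mul_le_mul_of_nonneg_left hwhineq ht0
    ring_nf
    ring_nf at this
    linarith
  have hAv := hA v hvmem
  have hBv := hB v hvmem
  have hCv := hC v hvmem
  rw [hvb] at hCv
  refine ⟨v, hvmem, hvb, ?_⟩
  have h1 : lamh * (1 - β * (D v)^2) ≤ lamh * bh (Ih v) (Ih v) :=
    mul_le_mul_of_nonneg_left hCv hlamh
  have h2 : ah (Ih v) (Ih v) + sh (Ih v) (Ih v) ≤ lam jm - (D v)^2 + α * (D v)^2 := by
    linarith
  nlinarith [h1, hscaled, h2]
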